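/- Let ε₀ = 2·cos(π/10) − √2. For all natural numbers a, b ≥ 1 with a + b ≥ 3, (a·b + 1)/((√2·a + ε₀)·(√2·b + ε₀)) < 1/2. -/

import Mathlib

/-!
Write `ε₀ = 2 cos(π/10) - √2`. Clearing denominators, the claim reads
`2 < √2 ε₀ (a + b) + ε₀²`. Since `cos(π/10) > 0.95` and `√2 > 1.414` give
`√2 ε₀ > 2/3`, already `a + b ≥ 3` forces `√2 ε₀ (a + b) > 2`.
-/

open Real

theorem four_div_three_lt_sqrt_two_mul_cos_pi_div_ten : 4 / 3 < √2 * cos (π / 10) := by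
  have hcos : 1 - (π / 10) ^ 2 / 2 ≤ cos (π / 10) := one_sub_sq_div_two_le_cos
  have hπ : π < 3.15 := by linarith [pi_lt_d2]
  have hcos_gt : 0.95 < cos (π / 10) := by nlinarith [pi_pos]
  have hsqrt : 1.414 < √2 := by
    rw [lt_sqrt (by norm_num)]
    norm_num
  nlinarith

theorem mul_add_one_div_sqrt_two_mul_add_lt_half {x y ε : ℝ} (hx : 0 ≤ x) (hy : 0 ≤ y)
    (hε : 0 < ε) (h : 2 ≤ √2 * ε * (x + y)) :
    (x * y + 1) / ((√2 * x + ε) * (√2 * y + ε)) < 1 / 2 := by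
  have hsq : √2 * √2 = 2 := mul_self_sqrt (by norm_num)
  rw [div_lt_iff₀ (by positivity)]
  linear_combination (1 / 2 : ℝ) * h + (1 / 2 : ℝ) * sq_pos_of_pos hε - (x * y / 2) * hsq

theorem stmt14_general (a b : ℕ) (hab : 3 ≤ a + b) :
    ((a : ℝ) * b + 1) /
      ((Real.sqrt 2 * a + (2 * Real.cos (π / 10) - Real.sqrt 2)) *
        (Real.sqrt 2 * b + (2 * Real.cos (π / 10) - Real.sqrt 2))) < 1 / 2 := by
  have hε : 2 / 3 < √2 * (2 * cos (π / 10) - √2) := by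
    linarith [four_div_three_lt_sqrt_two_mul_cos_pi_div_ten,
      mul_self_sqrt (zero_le_two : (0 : ℝ) ≤ 2)]
  have hab' : (3 : ℝ) ≤ a + b := by exact_mod_cast hab
  refine mul_add_one_div_sqrt_two_mul_add_lt_half a.cast_nonneg b.cast_nonneg
    (pos_of_mul_pos_right (by linarith) (sqrt_nonneg 2)) ?_
  nlinarith

theorem stmt14 (a b : ℕ) (ha : 1 ≤ a) (hb : 1 ≤ b) (hab : 3 ≤ a + b) :
    ((a : ℝ) * b + 1) /
      ((Real.sqrt 2 * a + (2 * Real.cos (π / 10) - Real.sqrt 2)) *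
        (Real.sqrt 2 * b + (2 * Real.cos (π / 10) - Real.sqrt 2))) < 1 / 2 :=
  stmt14_general a b hab
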